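/- Uniform boundedness of ADMM iterates: suppose the augmented Lagrangian L_ρ has a finite saddle point ((x¹*, x²*); y*) with x¹* = x²*. Then for any stepsize 0 < α < ρ, the ADMM iterates (x^{1,k}, x^{2,k}, y^k) satisfy: the sequence ‖y^k - y*‖² + αρ‖x^{2,k} - x²*‖² + α(ρ - α)‖(x^{1,k} - x^{2,k}) - (x¹* - x²*)‖² is nonincreasing in k; in particular all iterates remain in a bounded set independent of α ∈ (0, ρ). -/

import Mathlib

/-!
Both ADMM subproblems, and the saddle-point inequality with `u₂ = x*` (resp. `u₁ = x*`), are
proximal minimisations of a convex function, so their optimality conditions are subgradient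
inclusions:
`ρ (x²ₖ - x¹ₖ₊₁) - yₖ ∈ ∂h(x¹ₖ₊₁)`, `yₖ + ρ (x¹ₖ₊₁ - x²ₖ₊₁) ∈ ∂g(x²ₖ₊₁)`, `-y* ∈ ∂h(x*)`,
`y* ∈ ∂g(x*)`. Monotonicity of `∂h` and `∂g` yields two nonnegative inner products, and
expanding the multiplier update gives the exact identity
`Vₖ₊₁ + αρ‖x¹ₖ₊₁ - x²ₖ‖² + α(ρ-α)‖x¹ₖ - x²ₖ‖² + 2α·(those inner products) = Vₖ`
for `Vₖ = ‖yₖ - y*‖² + αρ‖x²ₖ - x*‖² + α(ρ-α)‖x¹ₖ - x²ₖ‖²`. When `0 < α < ρ` every term of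
`Vₖ ≤ V₀` is a positive multiple of a squared distance, which bounds the iterates.
-/

open scoped InnerProductSpace
open Set Filter Topology

section Subgradient

variable {E : Type*} [NormedAddCommGroup E] [InnerProductSpace ℝ E]

def HasSubgradientAt (f : E → ℝ) (s x : E) : Prop :=
  ∀ u, f x + ⟪s, u - x⟫_ℝ ≤ f u

theorem HasSubgradientAt.inner_sub_nonneg {f : E → ℝ} {s s' x x' : E}
    (h : HasSubgradientAt f s x) (h' : HasSubgradientAt f s' x') :
    0 ≤ ⟪s - s', x - x'⟫_ℝ := by
  have h₁ := h x'
  have h₂ := h' x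
  rw [← neg_sub x x', inner_neg_right] at h₁
  rw [inner_sub_left]
  linarith

theorem ConvexOn.hasSubgradientAt_of_le_add_inner_add_sq {f : E → ℝ}
    (hf : ConvexOn ℝ univ f) {s x : E} {c : ℝ}
    (h : ∀ u, f x ≤ f u + ⟪s, u - x⟫_ℝ + c * ‖u - x‖ ^ 2) :
    HasSubgradientAt f (-s) x := by
  intro u
  rw [inner_neg_left]
  set D := f u - f x + ⟪s, u - x⟫_ℝ
  have hD : ∀ t ∈ Ioc (0 : ℝ) 1, 0 ≤ D + t * (c * ‖u - x‖ ^ 2) := by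
    rintro t ⟨ht₀, ht₁⟩
    have hconv : f (x + t • (u - x)) ≤ (1 - t) * f x + t * f u := by
      have := hf.2 (mem_univ x) (mem_univ u) (sub_nonneg.2 ht₁) ht₀.le (sub_add_cancel 1 t)
      rwa [show (1 - t) • x + t • u = x + t • (u - x) by module] at this
    have hmin := h (x + t • (u - x))
    rw [add_sub_cancel_left, inner_smul_right, norm_smul, Real.norm_of_nonneg ht₀.le] at hmin
    have : 0 ≤ t * (D + t * (c * ‖u - x‖ ^ 2)) := by nlinarith
    exact nonneg_of_mul_nonneg_right this ht₀
  have hlim : Tendsto (fun t => D + t * (c * ‖u - x‖ ^ 2)) (𝓝[>] 0) (𝓝 D) :=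
    tendsto_nhdsWithin_of_tendsto_nhds <|
      (by fun_prop : Continuous fun t : ℝ => D + t * (c * ‖u - x‖ ^ 2)).tendsto' 0 D (by simp)
  have := ge_of_tendsto hlim (eventually_of_mem (Ioc_mem_nhdsGT one_pos) hD)
  linarith

theorem ConvexOn.hasSubgradientAt_of_prox {f : E → ℝ} (hf : ConvexOn ℝ univ f) {ρ : ℝ}
    {v x : E} (h : ∀ u, f x + ρ / 2 * ‖x - v‖ ^ 2 ≤ f u + ρ / 2 * ‖u - v‖ ^ 2) :
    HasSubgradientAt f (ρ • (v - x)) x := by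
  rw [← neg_sub x v, smul_neg]
  refine hf.hasSubgradientAt_of_le_add_inner_add_sq (c := ρ / 2) fun u => ?_
  have hu := h u
  rw [show u - v = (u - x) + (x - v) by abel, norm_add_sq_real, real_inner_comm] at hu
  rw [real_inner_smul_left]
  linarith

end Subgradient

theorem norm_le_add_sqrt_of_norm_sub_sq_le {E : Type*} [SeminormedAddCommGroup E] {x x₀ : E}
    {B : ℝ} (h : ‖x - x₀‖ ^ 2 ≤ B) : ‖x‖ ≤ ‖x₀‖ + √B := by
  have : ‖x - x₀‖ ≤ √B := Real.le_sqrt_of_sq_le h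
  linarith [norm_le_insert' x x₀]

section Lyapunov

variable {E : Type*} [SeminormedAddCommGroup E]

def admmLyapunov (α ρ : ℝ) (xstar ystar x₁ x₂ y : E) : ℝ :=
  ‖y - ystar‖ ^ 2 + α * ρ * ‖x₂ - xstar‖ ^ 2 + α * (ρ - α) * ‖x₁ - x₂‖ ^ 2

theorem exists_norm_le_of_admmLyapunov_le {α ρ B : ℝ} (hα : 0 < α) (hαρ : α < ρ)
    {xstar ystar : E} {x₁ x₂ y : ℕ → E}
    (hB : ∀ k, admmLyapunov α ρ xstar ystar (x₁ k) (x₂ k) (y k) ≤ B) :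
    ∃ C, ∀ k, ‖x₁ k‖ ≤ C ∧ ‖x₂ k‖ ≤ C ∧ ‖y k‖ ≤ C := by
  refine ⟨‖xstar‖ + ‖ystar‖ + √B + √(B / (α * ρ)) + √(B / (α * (ρ - α))), fun k => ?_⟩
  have hαρ₀ : 0 < α * ρ := mul_pos hα (hα.trans hαρ)
  have hαρα : 0 < α * (ρ - α) := mul_pos hα (sub_pos.2 hαρ)
  have hk := hB k
  unfold admmLyapunov at hk
  have ey : 0 ≤ ‖y k - ystar‖ ^ 2 := sq_nonneg _
  have e₂ : 0 ≤ α * ρ * ‖x₂ k - xstar‖ ^ 2 := by positivity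
  have e₁ : 0 ≤ α * (ρ - α) * ‖x₁ k - x₂ k‖ ^ 2 := by positivity
  have hy := norm_le_add_sqrt_of_norm_sub_sq_le (x := y k) (x₀ := ystar) (by linarith)
  have hx₂ := norm_le_add_sqrt_of_norm_sub_sq_le (x := x₂ k) (x₀ := xstar)
    (B := B / (α * ρ)) ((le_div_iff₀' hαρ₀).2 (by linarith))
  have hx₁ := norm_le_add_sqrt_of_norm_sub_sq_le (x := x₁ k) (x₀ := x₂ k)
    (B := B / (α * (ρ - α))) ((le_div_iff₀' hαρα).2 (by linarith))
  have := norm_nonneg xstar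
  have := norm_nonneg ystar
  have := Real.sqrt_nonneg B
  have := Real.sqrt_nonneg (B / (α * ρ))
  have := Real.sqrt_nonneg (B / (α * (ρ - α)))
  exact ⟨by linarith, by linarith, by linarith⟩

end Lyapunov

section ADMM

variable {E : Type*} [NormedAddCommGroup E] [InnerProductSpace ℝ E]

noncomputable def augmentedLagrangian (f g : E → ℝ) (ρ : ℝ) (x₁ x₂ y : E) : ℝ :=
  f x₁ + g x₂ + ⟪y, x₁ - x₂⟫_ℝ + ρ / 2 * ‖x₁ - x₂‖ ^ 2

theorem hasSubgradientAt_of_augmentedLagrangian_le {f g : E → ℝ} (hf : ConvexOn ℝ univ f)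
    (hg : ConvexOn ℝ univ g) {ρ : ℝ} {x y : E}
    (h : ∀ u₁ u₂, augmentedLagrangian f g ρ x x y ≤ augmentedLagrangian f g ρ u₁ u₂ y) :
    HasSubgradientAt f (-y) x ∧ HasSubgradientAt g y x := by
  simp only [augmentedLagrangian, sub_self, inner_zero_right, norm_zero] at h
  constructor
  · exact hf.hasSubgradientAt_of_le_add_inner_add_sq (c := ρ / 2) fun u => by linarith [h u x]
  · rw [← neg_neg y]
    refine hg.hasSubgradientAt_of_le_add_inner_add_sq (c := ρ / 2) fun u => ?_
    have hu := h x u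
    rw [← neg_sub u x, inner_neg_right, norm_neg] at hu
    rw [inner_neg_left]
    linarith

/-- `a, c, c₀, e` stand for `x¹ₖ₊₁ - x*`, `x²ₖ₊₁ - x*`, `x²ₖ - x*`, `yₖ - y*`. -/
theorem admm_lyapunov_step {α ρ : ℝ} (hα : 0 ≤ α) (hρ : 0 ≤ ρ) {a c c₀ e : E}
    (h₁ : 0 ≤ ⟪ρ • (c₀ - a) - e, a⟫_ℝ) (h₂ : 0 ≤ ⟪e + ρ • (a - c), c⟫_ℝ) :
    ‖e + α • (a - c)‖ ^ 2 + α * ρ * ‖c‖ ^ 2 + α * (ρ - α) * ‖a - c‖ ^ 2 ≤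
      ‖e‖ ^ 2 + α * ρ * ‖c₀‖ ^ 2 := by
  have key : ‖e + α • (a - c)‖ ^ 2 + α * ρ * ‖c‖ ^ 2 + α * (ρ - α) * ‖a - c‖ ^ 2 +
      α * ρ * ‖a - c₀‖ ^ 2 = ‖e‖ ^ 2 + α * ρ * ‖c₀‖ ^ 2 -
        2 * α * (⟪ρ • (c₀ - a) - e, a⟫_ℝ + ⟪e + ρ • (a - c), c⟫_ℝ) := by
    simp only [← real_inner_self_eq_norm_sq, inner_add_left, inner_add_right, inner_sub_left,
      inner_sub_right, real_inner_smul_left, real_inner_smul_right, real_inner_comm e a,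
      real_inner_comm e c, real_inner_comm a c, real_inner_comm c₀ a]
    ring
  have : 0 ≤ α * ρ * ‖a - c₀‖ ^ 2 := by positivity
  nlinarith

theorem admmLyapunov_succ_le {f g : E → ℝ} (hf : ConvexOn ℝ univ f) (hg : ConvexOn ℝ univ g)
    {ρ α : ℝ} (hρ : 0 < ρ) (hα : 0 ≤ α) (hαρ : α ≤ ρ) {xstar ystar : E}
    (hsaddle : ∀ u₁ u₂, augmentedLagrangian f g ρ xstar xstar ystar ≤
      augmentedLagrangian f g ρ u₁ u₂ ystar)
    {x₁ x₂ y : ℕ → E}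
    (hx₁ : ∀ k u, f (x₁ (k + 1)) + (ρ / 2) * ‖x₁ (k + 1) - x₂ k + (1 / ρ) • y k‖ ^ 2 ≤
      f u + (ρ / 2) * ‖u - x₂ k + (1 / ρ) • y k‖ ^ 2)
    (hx₂ : ∀ k u, g (x₂ (k + 1)) + (ρ / 2) * ‖x₂ (k + 1) - x₁ (k + 1) - (1 / ρ) • y k‖ ^ 2 ≤
      g u + (ρ / 2) * ‖u - x₁ (k + 1) - (1 / ρ) • y k‖ ^ 2)
    (hy : ∀ k, y (k + 1) = y k + α • (x₁ (k + 1) - x₂ (k + 1))) (k : ℕ) :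
    admmLyapunov α ρ xstar ystar (x₁ (k + 1)) (x₂ (k + 1)) (y (k + 1)) ≤
      admmLyapunov α ρ xstar ystar (x₁ k) (x₂ k) (y k) := by
  obtain ⟨hfstar, hgstar⟩ := hasSubgradientAt_of_augmentedLagrangian_le hf hg hsaddle
  have hρy : ρ • (1 / ρ) • y k = y k := by rw [smul_smul, mul_one_div_cancel hρ.ne', one_smul]
  have hf₁ : HasSubgradientAt f (ρ • (x₂ k - x₁ (k + 1)) - y k) (x₁ (k + 1)) := by
    have := hf.hasSubgradientAt_of_prox fun u => by simpa only [sub_add] using hx₁ k u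
    rwa [sub_right_comm, smul_sub, hρy] at this
  have hg₂ : HasSubgradientAt g (y k + ρ • (x₁ (k + 1) - x₂ (k + 1))) (x₂ (k + 1)) := by
    have := hg.hasSubgradientAt_of_prox fun u => by simpa only [sub_sub] using hx₂ k u
    rwa [add_sub_right_comm, smul_add, hρy, add_comm] at this
  have hmono₁ := hf₁.inner_sub_nonneg hfstar
  have hmono₂ := hg₂.inner_sub_nonneg hgstar
  have hstep := admm_lyapunov_step (e := y k - ystar) (a := x₁ (k + 1) - xstar)
    (c := x₂ (k + 1) - xstar) (c₀ := x₂ k - xstar) hα hρ.le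
    (by convert hmono₁ using 2; module) (by convert hmono₂ using 2; module)
  have hrest : 0 ≤ α * (ρ - α) * ‖x₁ k - x₂ k‖ ^ 2 :=
    mul_nonneg (mul_nonneg hα (sub_nonneg.2 hαρ)) (sq_nonneg _)
  rw [sub_sub_sub_cancel_right, sub_add_eq_add_sub, ← hy k] at hstep
  unfold admmLyapunov
  linarith

end ADMM

theorem convexOn_half_norm_sub_sq {E F : Type*} [AddCommGroup E] [Module ℝ E]
    [SeminormedAddCommGroup F] [NormedSpace ℝ F] (A : E →ₗ[ℝ] F) (b : F) :
    ConvexOn ℝ univ fun u => 1 / 2 * ‖A u - b‖ ^ 2 := by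
  have hsq : ConvexOn ℝ univ fun z : F => ‖z‖ ^ 2 :=
    convexOn_univ_norm.pow (fun _ _ => norm_nonneg _) 2
  simpa [Function.comp_def, sub_eq_neg_add] using
    ((hsq.translate_right (-b)).comp_linearMap A).smul (by norm_num : (0 : ℝ) ≤ 1 / 2)

theorem convexOn_sqrt_sum_sq {ι : Type*} [Fintype ι] (s : Finset ι) :
    ConvexOn ℝ univ fun x : EuclideanSpace ℝ ι => √(∑ t ∈ s, x t ^ 2) := by
  let P : EuclideanSpace ℝ ι →ₗ[ℝ] EuclideanSpace ℝ s :=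
    (WithLp.linearEquiv 2 ℝ (s → ℝ)).symm.toLinearMap ∘ₗ
      LinearMap.funLeft ℝ ℝ ((↑) : s → ι) ∘ₗ (WithLp.linearEquiv 2 ℝ (ι → ℝ)).toLinearMap
  have hP : (fun x : EuclideanSpace ℝ ι => √(∑ t ∈ s, x t ^ 2)) = fun x => ‖P x‖ := by
    funext x
    rw [EuclideanSpace.norm_eq, ← Finset.sum_coe_sort s]
    simp [P]
  rw [hP]
  exact convexOn_univ_norm.comp_linearMap P

theorem convexOn_groupLasso {ι G : Type*} [Fintype ι] [Fintype G] {lam : ℝ} (hlam : 0 ≤ lam)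
    {w : G → ℝ} (hw : ∀ g, 0 ≤ w g) (j : G → Finset ι) :
    ConvexOn ℝ univ fun x : EuclideanSpace ℝ ι =>
      lam * ∑ g, w g * √(∑ t ∈ j g, x t ^ 2) := by
  have hsum : ConvexOn ℝ univ
      (∑ g, fun x : EuclideanSpace ℝ ι => w g * √(∑ t ∈ j g, x t ^ 2)) :=
    Finset.sum_induction _ (ConvexOn ℝ univ) (fun _ _ => ConvexOn.add)
      (convexOn_const 0 convex_univ) fun g _ => (convexOn_sqrt_sum_sq (j g)).smul (hw g)
  simpa [Finset.sum_fn] using hsum.smul hlam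

/-- Uniform boundedness of ADMM iterates. If the augmented Lagrangian
has a finite saddle point `((x¹*, x²*); y*)` with `x¹* = x²*`, then for any stepsize
`0 < α < ρ` the ADMM iterates satisfy: the Lyapunov sequence
`‖y^k - y*‖² + αρ‖x^{2,k} - x²*‖² + α(ρ-α)‖(x^{1,k} - x^{2,k}) - (x¹* - x²*)‖²`
is nonincreasing (for `k ≥ 1`); in particular the iterates remain in a bounded set. -/
theorem admm_iterates_uniformly_bounded
    (n d : ℕ) (G : Type) [Fintype G] (lam ρ α : ℝ) (hlam : 0 < lam) (hρ : 0 < ρ)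
    (hα : 0 < α) (hαρ : α < ρ)
    (w : G → ℝ) (hw : ∀ g, 0 < w g) (j : G → Finset (Fin n))
    (M : Matrix (Fin d) (Fin n) ℝ) (b : EuclideanSpace ℝ (Fin d))
    (x1s x2s ys : ℕ → EuclideanSpace ℝ (Fin n))
    (x1star x2star ystar : EuclideanSpace ℝ (Fin n)) :
    let h : EuclideanSpace ℝ (Fin n) → ℝ := fun x =>
      lam * ∑ g, w g * Real.sqrt (∑ t ∈ j g, x t ^ 2)
    let L : EuclideanSpace ℝ (Fin n) → EuclideanSpace ℝ (Fin n) →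
        EuclideanSpace ℝ (Fin n) → ℝ := fun u1 u2 y =>
      h u1 + (1 / 2) * ‖Matrix.toEuclideanLin M u2 - b‖ ^ 2 + ⟪y, u1 - u2⟫_ℝ +
        (ρ / 2) * ‖u1 - u2‖ ^ 2
    -- saddle point with x¹* = x²*
    x1star = x2star →
    (∀ y, L x1star x2star y ≤ L x1star x2star ystar) →
    (∀ u1 u2, L x1star x2star ystar ≤ L u1 u2 ystar) →
    -- ADMM iterates
    (∀ k u, h (x1s (k + 1)) + (ρ / 2) * ‖x1s (k + 1) - x2s k + (1 / ρ) • ys k‖ ^ 2 ≤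
      h u + (ρ / 2) * ‖u - x2s k + (1 / ρ) • ys k‖ ^ 2) →
    (∀ k u, (1 / 2) * ‖Matrix.toEuclideanLin M (x2s (k + 1)) - b‖ ^ 2 +
        (ρ / 2) * ‖x2s (k + 1) - x1s (k + 1) - (1 / ρ) • ys k‖ ^ 2 ≤
      (1 / 2) * ‖Matrix.toEuclideanLin M u - b‖ ^ 2 +
        (ρ / 2) * ‖u - x1s (k + 1) - (1 / ρ) • ys k‖ ^ 2) →
    (∀ k, ys (k + 1) = ys k + α • (x1s (k + 1) - x2s (k + 1))) →
    ((∀ k, 1 ≤ k →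
        ‖ys (k + 1) - ystar‖ ^ 2 + α * ρ * ‖x2s (k + 1) - x2star‖ ^ 2 +
            α * (ρ - α) * ‖(x1s (k + 1) - x2s (k + 1)) - (x1star - x2star)‖ ^ 2 ≤
          ‖ys k - ystar‖ ^ 2 + α * ρ * ‖x2s k - x2star‖ ^ 2 +
            α * (ρ - α) * ‖(x1s k - x2s k) - (x1star - x2star)‖ ^ 2) ∧
      ∃ C : ℝ, ∀ k, ‖x1s k‖ ≤ C ∧ ‖x2s k‖ ≤ C ∧ ‖ys k‖ ≤ C) := by
  intro h L hstar _ hsaddle hx1 hx2 hy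
  subst hstar
  have hh : ConvexOn ℝ univ h := convexOn_groupLasso hlam.le (fun g => (hw g).le) j
  have hg := convexOn_half_norm_sub_sq (Matrix.toEuclideanLin M) b
  have hstep := admmLyapunov_succ_le hh hg hρ hα.le hαρ.le hsaddle hx1 hx2 hy
  have hanti : Antitone fun k => admmLyapunov α ρ x1star ystar (x1s k) (x2s k) (ys k) :=
    antitone_nat_of_succ_le hstep
  exact ⟨fun k _ => by simpa only [admmLyapunov, sub_self, sub_zero] using hstep k,
    exists_norm_le_of_admmLyapunov_le hα hαρ fun k => hanti (Nat.zero_le k)⟩
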